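/- Almost surely, the set S of successful integers is unbounded above and unbounded below in ℤ, is stable under f (if n ∈ S then f(n) ∈ S), and is totally ordered by ancestry: for any two successful integers k < k′ there exists j ≥ 0 with f^j(k) = k′. (Thus the successful integers form the unique bi-infinite path of the tree T^f.) -/

import Mathlib

/-!
Call `c` a cut point of `f` if no `q < c` jumps over it. Every `m ≤ c` then climbs to `c`, so
cut points are successful; and if `c < k < k'` with `k, k'` successful, descendants of `k` and of
`k'` lying below `c` both pass through `c`, which puts `c`, `k`, `k'` on one orbit. So it suffices
that cut points are almost surely unbounded below.

The integer `c` is a cut point iff `a (c - 1 - i) ≤ i + 1` for all `i : ℕ`. These independent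
events have positive probability since `P(a 0 = 1) > 0`, and summable failure probabilities since
`E (a 0) < ∞`, so all of them hold with probability at least some `δ > 0` not depending on `c`.
Hence infinitely many cut points towards `-∞` is a tail event of probability at least `δ`, so of
probability one by Kolmogorov's zero-one law.
-/

open MeasureTheory ProbabilityTheory Filter
open scoped ENNReal

/-- The random map `f(n) = n + a_n` generating the family tree `T^f`. -/
def genMap {Ω : Type*} (a : ℤ → Ω → ℕ) (ω : Ω) : ℤ → ℤ :=
  fun n => n + (a n ω : ℤ)

/-- The set of successful integers: those with infinitely many descendants. -/
def successfulSet {Ω : Type*} (a : ℤ → Ω → ℕ) (ω : Ω) : Set ℤ :=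
  {n : ℤ | Set.Infinite {m : ℤ | ∃ j : ℕ, (genMap a ω)^[j] m = n}}

def descendants (f : ℤ → ℤ) (n : ℤ) : Set ℤ := {m | ∃ j : ℕ, f^[j] m = n}

def successful (f : ℤ → ℤ) : Set ℤ := {n | (descendants f n).Infinite}

def IsCutPoint (f : ℤ → ℤ) (c : ℤ) : Prop := ∀ q < c, f q ≤ c

section Descendants

variable {f : ℤ → ℤ}

lemma add_le_iterate (hf : ∀ n, n < f n) (m : ℤ) (j : ℕ) : m + j ≤ f^[j] m := by
  induction j with
  | zero => simp
  | succ j ih =>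
    rw [Function.iterate_succ_apply']
    have := hf (f^[j] m)
    push_cast
    omega

lemma descendants_subset_iterate (n : ℤ) (j : ℕ) :
    descendants f n ⊆ descendants f (f^[j] n) :=
  fun _ ⟨i, hi⟩ => ⟨j + i, by rw [Function.iterate_add_apply, hi]⟩

lemma IsCutPoint.mem_descendants (hf : ∀ n, n < f n) {c : ℤ} (hc : IsCutPoint f c) :
    ∀ {m}, m ≤ c → m ∈ descendants f c := by
  suffices ∀ k : ℕ, ∀ m, c - m ≤ k → m ≤ c → m ∈ descendants f c from
    fun {m} hm => this (c - m).toNat m (Int.self_le_toNat _) hm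
  intro k
  induction k with
  | zero => exact fun m _ _ => ⟨0, by simp only [Function.iterate_zero, id]; omega⟩
  | succ k ih =>
    intro m hk hm
    rcases hm.eq_or_lt with rfl | hlt
    · exact ⟨0, rfl⟩
    · obtain ⟨j, hj⟩ := ih (f m) (by have := hf m; omega) (hc m hlt)
      exact ⟨j + 1, by rwa [Function.iterate_succ_apply]⟩

lemma IsCutPoint.mem_successful (hf : ∀ n, n < f n) {c : ℤ} (hc : IsCutPoint f c) :
    c ∈ successful f :=
  (Set.Iic_infinite c).mono fun _ => hc.mem_descendants hf

lemma exists_lt_mem_descendants (hf : ∀ n, n < f n) {n : ℤ} (hn : n ∈ successful f)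
    (M : ℤ) : ∃ m < M, m ∈ descendants f n := by
  by_contra! h
  refine hn ((Set.finite_Icc M n).subset fun m hm => ⟨not_lt.1 fun hlt => h m hlt hm, ?_⟩)
  obtain ⟨j, rfl⟩ := hm
  have := add_le_iterate hf m j
  omega

lemma mem_descendants_of_le (hf : ∀ n, n < f n) {m x y : ℤ} (hx : m ∈ descendants f x)
    (hy : m ∈ descendants f y) (hxy : x ≤ y) : x ∈ descendants f y := by
  obtain ⟨i, rfl⟩ := hx
  obtain ⟨j, rfl⟩ := hy
  obtain ⟨k, rfl⟩ : ∃ k, j = i + k := by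
    refine Nat.exists_eq_add_of_le (not_lt.1 fun hji => ?_)
    obtain ⟨k, rfl⟩ := Nat.exists_eq_add_of_lt hji
    have := add_le_iterate hf (f^[j] m) (k + 1)
    rw [← Function.iterate_add_apply, show k + 1 + j = j + k + 1 by omega] at this
    push_cast at this
    omega
  exact ⟨k, by rw [← Function.iterate_add_apply, add_comm]⟩

lemma successful_iterate {n : ℤ} (hn : n ∈ successful f) (j : ℕ) : f^[j] n ∈ successful f :=
  hn.mono (descendants_subset_iterate n j)

theorem biinfinite_path_of_frequently_isCutPoint (hf : ∀ n, n < f n)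
    (hcut : ∃ᶠ c in atBot, IsCutPoint f c) :
    (∀ M, ∃ k ∈ successful f, M < k) ∧
    (∀ M, ∃ k ∈ successful f, k < M) ∧
    (∀ n ∈ successful f, f n ∈ successful f) ∧
    (∀ k ∈ successful f, ∀ k' ∈ successful f, k < k' → ∃ j : ℕ, f^[j] k = k') := by
  rw [frequently_atBot'] at hcut
  have hbelow (M) : ∃ k ∈ successful f, k < M := by
    obtain ⟨c, hcM, hc⟩ := hcut M
    exact ⟨c, hc.mem_successful hf, hcM⟩
  refine ⟨fun M => ?_, hbelow, fun n hn => successful_iterate hn 1,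
    fun k hk k' hk' hkk' => ?_⟩
  · obtain ⟨n, hn, -⟩ := hbelow 0
    refine ⟨_, successful_iterate hn (M + 1 - n).toNat, ?_⟩
    have := add_le_iterate hf n (M + 1 - n).toNat
    omega
  · -- descendants of `k` and `k'` below a cut point `c < k` climb to `c`
    obtain ⟨c, hc_lt, hc⟩ := hcut k
    obtain ⟨m, hmc, hm⟩ := exists_lt_mem_descendants hf hk c
    obtain ⟨m', hmc', hm'⟩ := exists_lt_mem_descendants hf hk' c
    have hck : c ∈ descendants f k :=
      mem_descendants_of_le hf (hc.mem_descendants hf hmc.le) hm hc_lt.le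
    have hck' : c ∈ descendants f k' :=
      mem_descendants_of_le hf (hc.mem_descendants hf hmc'.le) hm' (hc_lt.trans hkk').le
    exact mem_descendants_of_le hf hck hck' hkk'.le

end Descendants

section Probability

variable {Ω : Type*}

lemma measurableSet_limsup_atBot {ι : Type*} [Preorder ι] [IsCodirectedOrder ι] [Nonempty ι]
    [Countable ι]
    {m : ι → MeasurableSpace Ω} {s : ι → Set Ω}
    (hs : ∀ i, MeasurableSet[⨆ j ≤ i, m j] (s i)) :
    MeasurableSet[limsup m atBot] (limsup s atBot) := by
  rw [limsup_eq, MeasurableSpace.measurableSet_sInf]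
  rintro m' hm'
  obtain ⟨i₀, hi₀⟩ := eventually_atBot.1 hm'
  rw [(atBot_basis' i₀).limsup_eq_iInf_iSup]
  simp only [Set.iInf_eq_iInter, Set.iSup_eq_iUnion]
  refine .iInter fun i => .iInter fun hi => .biUnion (Set.to_countable _) fun j hj => ?_
  exact iSup₂_le (fun k hk => hi₀ k (hk.trans (hj.trans hi))) _ (hs j)

variable [MeasurableSpace Ω]

lemma tsum_measure_lt_eq_lintegral (μ : Measure Ω) {X : Ω → ℕ} (hX : Measurable X) :
    ∑' j : ℕ, μ {ω | j < X ω} = ∫⁻ ω, (X ω : ℝ≥0∞) ∂μ := by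
  have hmeas (j : ℕ) : MeasurableSet {ω | j < X ω} := hX (measurableSet_Ioi (a := j))
  have hcount (ω : Ω) : ∑' j : ℕ, {ω | j < X ω}.indicator 1 ω = (X ω : ℝ≥0∞) := by
    rw [tsum_eq_sum (s := Finset.range (X ω)) (by simp +contextual)]
    simp_all [← Finset.mem_range]
  calc ∑' j : ℕ, μ {ω | j < X ω}
      = ∑' j : ℕ, ∫⁻ ω, {ω | j < X ω}.indicator 1 ω ∂μ :=
        tsum_congr fun j => (lintegral_indicator_one (hmeas j)).symm
    _ = ∫⁻ ω, (X ω : ℝ≥0∞) ∂μ := by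
        rw [← lintegral_tsum fun j => (measurable_one.indicator (hmeas j)).aemeasurable]
        exact lintegral_congr hcount

lemma le_measure_limsup_atBot {ι : Type*} [Preorder ι] [IsCodirectedOrder ι] [Nonempty ι]
    [Countable ι] (μ : Measure Ω) [IsFiniteMeasure μ] {s : ι → Set Ω}
    (hs : ∀ i, MeasurableSet (s i)) {δ : ℝ≥0∞} (hδ : ∀ i, δ ≤ μ (s i)) :
    δ ≤ μ (limsup s atBot) := by
  have hmono : Monotone fun i => ⋃ j ∈ Set.Iic i, s j :=
    fun i i' hii' => Set.biUnion_subset_biUnion_left (Set.Iic_subset_Iic.2 hii')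
  rw [atBot_basis.limsup_eq_iInf_iSup]
  simp only [iInf_true, Set.iInf_eq_iInter, Set.iSup_eq_iUnion]
  rw [hmono.measure_iInter (fun i => (MeasurableSet.biUnion (Set.to_countable _)
    fun j _ => hs j).nullMeasurableSet) ⟨Classical.arbitrary ι, measure_ne_top _ _⟩]
  exact le_iInf fun i => (hδ i).trans (measure_mono (Set.subset_biUnion_of_mem le_rfl))

variable (P : Measure Ω) [IsProbabilityMeasure P]

lemma exists_forall_le_measure_iInter {p : ℕ → ℝ≥0∞} (hp : ∀ i, p i ≠ 0)
    (hsum : ∑' i, (1 - p i) ≠ ∞) :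
    ∃ δ ≠ 0, ∀ E : ℕ → Set Ω, (∀ i, MeasurableSet (E i)) → iIndepSet E P →
      (∀ i, P (E i) = p i) → δ ≤ P (⋂ i, E i) := by
  obtain ⟨N, hN⟩ := ((ENNReal.tendsto_sum_nat_add _ hsum).eventually_le_const
    (by norm_num : (0 : ℝ≥0∞) < 2⁻¹)).exists
  refine ⟨(∏ i ∈ Finset.range N, p i) * 2⁻¹,
    mul_ne_zero (Finset.prod_ne_zero_iff.2 fun i _ => hp i) (by norm_num), ?_⟩
  intro E hE hindep hPE
  -- the first `N` events are independent of the others, which fail with probability `≤ 1/2`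
  have hsplit : ⋂ i, E i = (⋂ i ∈ Finset.range N, E i) ∩ ⋂ i, E (i + N) := by
    ext ω
    simp only [Set.mem_iInter, Set.mem_inter_iff, Finset.mem_range]
    refine ⟨fun h => ⟨fun i _ => h i, fun i => h (i + N)⟩, fun ⟨h₁, h₂⟩ i => ?_⟩
    rcases lt_or_ge i N with hi | hi
    · exact h₁ i hi
    · simpa [Nat.sub_add_cancel hi] using h₂ (i - N)
  have hindep_split := hindep.indep_generateFrom_of_disjoint hE (Set.Iio N) (Set.Ici N)
    (Set.Iio_disjoint_Ici le_rfl)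
  have hhead : MeasurableSet[MeasurableSpace.generateFrom {t | ∃ n ∈ Set.Iio N, E n = t}]
      (⋂ i ∈ Finset.range N, E i) :=
    .biInter (Set.to_countable _) fun i hi =>
      MeasurableSpace.measurableSet_generateFrom ⟨i, Finset.mem_range.1 hi, rfl⟩
  have htail : MeasurableSet[MeasurableSpace.generateFrom {t | ∃ n ∈ Set.Ici N, E n = t}]
      (⋂ i, E (i + N)) :=
    .iInter fun i => MeasurableSpace.measurableSet_generateFrom ⟨i + N, by simp, rfl⟩
  have htail_le : 2⁻¹ ≤ P (⋂ i, E (i + N)) := by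
    rw [← compl_compl (⋂ i, E (i + N)), Set.compl_iInter,
      prob_compl_eq_one_sub (.iUnion fun i => (hE _).compl), ← ENNReal.one_sub_inv_two]
    refine tsub_le_tsub_left ((measure_iUnion_le _).trans ?_) 1
    calc ∑' i, P (E (i + N))ᶜ = ∑' i, (1 - p (i + N)) := by
          simp_rw [prob_compl_eq_one_sub (hE _), hPE]
      _ ≤ 2⁻¹ := hN
  rw [hsplit, (Indep_iff _ _ _).1 hindep_split _ _ hhead htail, hindep.meas_biInter]
  simp_rw [hPE]
  gcongr

end Probability

section CutPoints

variable {Ω : Type*}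

lemma setOf_isCutPoint_genMap (a : ℤ → Ω → ℕ) (c : ℤ) :
    {ω | IsCutPoint (genMap a ω) c} = ⋂ i : ℕ, a (c - (i + 1)) ⁻¹' Set.Iic (i + 1) := by
  ext ω
  simp only [IsCutPoint, genMap, Set.mem_ofPred_eq, Set.mem_iInter, Set.mem_preimage,
    Set.mem_Iic]
  refine ⟨fun h i => ?_, fun h q hq => ?_⟩
  · have := h (c - (i + 1)) (by omega)
    omega
  · have := h (c - q - 1).toNat
    rw [Int.toNat_of_nonneg (by omega), show c - (c - q - 1 + 1) = q by ring] at this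
    omega

lemma measurableSet_isCutPoint_genMap (a : ℤ → Ω → ℕ) (c : ℤ) :
    MeasurableSet[⨆ q ≤ c, MeasurableSpace.comap (a q) inferInstance]
      {ω | IsCutPoint (genMap a ω) c} := by
  rw [setOf_isCutPoint_genMap]
  exact .iInter fun i => le_iSup₂ (f := fun q (_ : q ≤ c) => MeasurableSpace.comap (a q) _)
    (c - (i + 1)) (by omega) _ ⟨_, measurableSet_Iic, rfl⟩

variable [MeasurableSpace Ω] (P : Measure Ω) [IsProbabilityMeasure P] {a : ℤ → Ω → ℕ}

lemma exists_forall_le_measure_isCutPoint (hmeas : ∀ n, Measurable (a n))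
    (hindep : iIndepFun a P) (hident : ∀ n, Measure.map (a n) P = Measure.map (a 0) P)
    (hmean : ∫⁻ ω, (a 0 ω : ℝ≥0∞) ∂P < ⊤) (h1 : 0 < P {ω | a 0 ω = 1}) :
    ∃ δ ≠ 0, ∀ c, δ ≤ P {ω | IsCutPoint (genMap a ω) c} := by
  have hlaw (n : ℤ) (t : Set ℕ) : P (a n ⁻¹' t) = P (a 0 ⁻¹' t) := by
    rw [← Measure.map_apply (hmeas n) (.of_discrete), hident n,
      Measure.map_apply (hmeas 0) (.of_discrete)]
  have hp (i : ℕ) : P (a 0 ⁻¹' Set.Iic (i + 1)) ≠ 0 :=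
    (h1.trans_le (measure_mono fun ω (hω : a 0 ω = 1) => by simp [hω])).ne'
  have hsum : ∑' i : ℕ, (1 - P (a 0 ⁻¹' Set.Iic (i + 1))) ≠ ∞ := by
    refine ne_top_of_le_ne_top (tsum_measure_lt_eq_lintegral P (hmeas 0) ▸ hmean.ne)
      (ENNReal.tsum_le_tsum fun i => ?_)
    rw [← prob_compl_eq_one_sub (hmeas 0 measurableSet_Iic)]
    exact measure_mono fun ω hω => by simp only [Set.mem_compl_iff, Set.mem_preimage,
      Set.mem_Iic, not_le, Set.mem_ofPred_eq] at hω ⊢; omega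
  obtain ⟨δ, hδ, hδle⟩ := exists_forall_le_measure_iInter P hp hsum
  refine ⟨δ, hδ, fun c => ?_⟩
  have hinj : Function.Injective fun i : ℕ => c - (i + 1) := fun i j h => by simpa using h
  rw [setOf_isCutPoint_genMap]
  refine hδle _ (fun i => hmeas _ measurableSet_Iic) ?_ (fun i => hlaw _ _)
  refine (iIndepSet_iff_meas_biInter fun i => hmeas _ measurableSet_Iic).2 fun s => ?_
  exact (hindep.precomp hinj).meas_biInter fun i _ => ⟨_, measurableSet_Iic, rfl⟩

theorem ae_frequently_isCutPoint (hmeas : ∀ n, Measurable (a n))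
    (hindep : iIndepFun a P) (hident : ∀ n, Measure.map (a n) P = Measure.map (a 0) P)
    (hmean : ∫⁻ ω, (a 0 ω : ℝ≥0∞) ∂P < ⊤) (h1 : 0 < P {ω | a 0 ω = 1}) :
    ∀ᵐ ω ∂P, ∃ᶠ c in atBot, IsCutPoint (genMap a ω) c := by
  set G := limsup (fun c => {ω | IsCutPoint (genMap a ω) c}) atBot
  have hcut (c : ℤ) : MeasurableSet {ω | IsCutPoint (genMap a ω) c} :=
    iSup₂_le (fun q _ => (hmeas q).comap_le) _ (measurableSet_isCutPoint_genMap a c)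
  obtain ⟨δ, hδ, hδle⟩ := exists_forall_le_measure_isCutPoint P hmeas hindep hident hmean h1
  have hG_pos : P G ≠ 0 :=
    (pos_iff_ne_zero.2 hδ |>.trans_le (le_measure_limsup_atBot P hcut hδle)).ne'
  have htail := measurableSet_limsup_atBot (measurableSet_isCutPoint_genMap a)
  have hG : MeasurableSet G :=
    (limsup_le_iSup.trans (iSup_le fun q => (hmeas q).comap_le)) _ htail
  have hG_one : P G = 1 :=
    (measure_zero_or_one_of_measurableSet_limsup_atBot (fun q => (hmeas q).comap_le)
      hindep.iIndep htail).resolve_left hG_pos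
  filter_upwards [ae_iff.2 ((prob_compl_eq_zero_iff hG).2 hG_one)] with ω hω
  exact mem_limsup_iff_frequently_mem.1 hω

end CutPoints

/-- Almost surely, the set `S` of successful integers is unbounded
above and unbounded below in `ℤ`, is stable under `f` (if `n ∈ S` then `f(n) ∈ S`),
and is totally ordered by ancestry: for any two successful integers `k < k'` there
exists `j ≥ 0` with `f^j(k) = k'`. (Thus the successful integers form the unique
bi-infinite path of the tree `T^f`.) -/
theorem successful_integers_biinfinite_path
    {Ω : Type*} [MeasurableSpace Ω] (P : Measure Ω) [IsProbabilityMeasure P]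
    (a : ℤ → Ω → ℕ) (hmeas : ∀ n, Measurable (a n)) (hpos : ∀ n ω, 1 ≤ a n ω)
    (hindep : iIndepFun a P)
    (hident : ∀ n, Measure.map (a n) P = Measure.map (a 0) P)
    (hmean : ∫⁻ ω, (a 0 ω : ℝ≥0∞) ∂P < ⊤)
    (h1 : 0 < P {ω | a 0 ω = 1}) :
    ∀ᵐ ω ∂P,
      (∀ M : ℤ, ∃ k ∈ successfulSet a ω, M < k) ∧
      (∀ M : ℤ, ∃ k ∈ successfulSet a ω, k < M) ∧
      (∀ n ∈ successfulSet a ω, genMap a ω n ∈ successfulSet a ω) ∧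
      (∀ k ∈ successfulSet a ω, ∀ k' ∈ successfulSet a ω, k < k' →
        ∃ j : ℕ, (genMap a ω)^[j] k = k') := by
  filter_upwards [ae_frequently_isCutPoint P hmeas hindep hident hmean h1] with ω hω
  exact biinfinite_path_of_frequently_isCutPoint
    (fun n => lt_add_of_pos_right n (by exact_mod_cast hpos n ω)) hω
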